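/- Given cochain complexes V, W with symmetric pairings τ, ω of the same degree p, and a cochain map f : V → W preserving the pairings (τ = ω ∘ (f ⊗ f)), the symmetric algebra extension Sym f intertwines the Laplacians: Sym f ∘ Δ_τ = Δ_ω ∘ Sym f. -/
import Mathlib


/-!
STATEMENT 5: Given cochain complexes `V, W` with symmetric pairings `τ, ω` of the
same degree `p`, and a cochain map `f : V → W` preserving the pairings
(`τ = ω ∘ (f ⊗ f)`), the symmetric algebra extension `Sym f` intertwines the
Laplacians: `Sym f ∘ Δ_τ = Δ_ω ∘ Sym f`.

`Sym V` and `Sym W` are modeled as abstract graded-commutative algebras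
generated by graded spaces of generators; `Sym f` is modeled as a degree- and
generator-preserving algebra map `Φ`.
-/

/-- Koszul sign `(−1)ⁿ`. -/
def gsgn (K : Type*) [Field K] (n : ℤ) : K := if Even n then 1 else -1

/-- A model of the graded symmetric algebra `Sym V` of a graded vector space `V`:
a ℤ-graded, graded-commutative algebra generated by a graded space of
generators. -/
structure GSA (K : Type*) [Field K] (A : Type*) [AddCommGroup A] [Module K A] where
  grade : ℤ → Submodule K A
  one : A
  mul : A →ₗ[K] A →ₗ[K] A
  one_mem : one ∈ grade 0
  mul_mem : ∀ {i j : ℤ} {a b : A}, a ∈ grade i → b ∈ grade j → mul a b ∈ grade (i + j)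
  one_mul : ∀ a, mul one a = a
  mul_one : ∀ a, mul a one = a
  mul_assoc : ∀ a b c, mul (mul a b) c = mul a (mul b c)
  mul_comm : ∀ {i j : ℤ} {a b : A}, a ∈ grade i → b ∈ grade j →
    mul a b = gsgn K (i * j) • mul b a
  /-- the generators (the image of `V` in `Sym V`) -/
  gen : ℤ → Submodule K A
  gen_le : ∀ i, gen i ≤ grade i

namespace GSA

variable {K : Type*} [Field K] {A : Type*} [AddCommGroup A] [Module K A]

/-- monomials in the generators -/
inductive IsMon (S : GSA K A) : A → Prop
  | one : IsMon S S.one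
  | gen {i : ℤ} {v : A} : v ∈ S.gen i → IsMon S v
  | mul {a b : A} : IsMon S a → IsMon S b → IsMon S (S.mul a b)

/-- `A` is spanned by monomials in the generators (as is the case for `Sym V`). -/
def Generates (S : GSA K A) : Prop :=
  ∀ a : A, a ∈ Submodule.span K {x | S.IsMon x}

/-- a symmetric pairing `τ ∈ [V ⊗ V, K]^p` of degree `p`, extended by zero to `A` -/
structure IsSymPairing (S : GSA K A) (p : ℤ) (τ : A →ₗ[K] A →ₗ[K] K) : Prop where
  symm : ∀ {i j : ℤ} {a b : A}, a ∈ S.grade i → b ∈ S.grade j →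
    τ a b = gsgn K (i * j) * τ b a
  deg : ∀ {i j : ℤ} {a b : A}, a ∈ S.grade i → b ∈ S.grade j →
    i + j + p ≠ 0 → τ a b = 0

/-- the bracket `μ⟨a,b⟩_τ` measuring the failure of `D = Δ_τ` (of degree `p`)
to be a signed derivation; `i` is the degree of `a`. -/
def br (S : GSA K A) (D : A →ₗ[K] A) (p i : ℤ) (a b : A) : A :=
  D (S.mul a b) - S.mul (D a) b - gsgn K (p * i) • S.mul a (D b)

/-- the defining properties of the Laplacian `Δ_τ` of a symmetric degree-`p`
pairing `τ` (Definition 2.5 of the paper, with the bi-derivation property of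
`⟨−,−⟩_τ` of Definition 2.3 expressed through the bracket `br`). -/
structure IsLaplacian (S : GSA K A) (p : ℤ) (τ : A →ₗ[K] A →ₗ[K] K)
    (D : A →ₗ[K] A) : Prop where
  deg : ∀ {i : ℤ} {a : A}, a ∈ S.grade i → D a ∈ S.grade (i + p)
  map_one : D S.one = 0
  map_gen : ∀ {i : ℤ} {v : A}, v ∈ S.gen i → D v = 0
  map_pair : ∀ {i j : ℤ} {v w : A}, v ∈ S.gen i → w ∈ S.gen j →
    D (S.mul v w) = τ v w • S.one
  br_der : ∀ {i j k : ℤ} {a b c : A}, a ∈ S.grade i → b ∈ S.grade j → c ∈ S.grade k →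
    S.br D p i a (S.mul b c) =
      S.mul (S.br D p i a b) c + gsgn K ((i + p) * j) • S.mul b (S.br D p i a c)

end GSA

section Aux

variable {K : Type*} [Field K] {A : Type*} [AddCommGroup A] [Module K A]

lemma gsgn_add (m n : ℤ) : gsgn K (m + n) = gsgn K m * gsgn K n := by
  unfold gsgn
  by_cases hm : Even m <;> by_cases hn : Even n <;>
    simp [hm, hn, Int.even_add]

lemma gsgn_mul_self (n : ℤ) : gsgn K n * gsgn K n = 1 := by
  unfold gsgn; by_cases h : Even n <;> simp [h]

lemma gsgn_even {n : ℤ} (h : Even n) : gsgn K n = 1 := by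
  simp [gsgn, h]

lemma gsgn_congr {m n : ℤ} (h : Even (m - n)) : gsgn K m = gsgn K n := by
  rw [Int.even_sub] at h
  simp [gsgn, h]

lemma br_one_right (S : GSA K A) (D : A →ₗ[K] A) (hone : D S.one = 0)
    (p i : ℤ) (a : A) : S.br D p i a S.one = 0 := by
  simp [GSA.br, S.mul_one, hone]

lemma br_symm (S : GSA K A) (p : ℤ) (D : A →ₗ[K] A)
    (hdeg : ∀ {i : ℤ} {a : A}, a ∈ S.grade i → D a ∈ S.grade (i + p))
    {i j : ℤ} {a b : A} (ha : a ∈ S.grade i) (hb : b ∈ S.grade j) :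
    S.br D p i a b = gsgn K (i * j) • S.br D p j b a := by
  unfold GSA.br
  have s1 : gsgn K (p * i) * gsgn K (i * (j + p)) = gsgn K (i * j) := by
    rw [← gsgn_add]
    exact gsgn_congr ⟨i * p, by ring⟩
  have s2 : gsgn K ((i + p) * j) = gsgn K (i * j) * gsgn K (p * j) := by
    rw [← gsgn_add]
    exact congrArg (gsgn K) (by ring)
  rw [S.mul_comm ha hb, S.mul_comm (hdeg ha) hb, S.mul_comm ha (hdeg hb),
    map_smul, smul_sub, smul_sub, smul_smul, s1, s2, sub_right_comm, mul_smul]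

end Aux

/-- `Sym f` intertwines the Laplacians of pairings preserved by `f`. -/
theorem sym_map_intertwines_laplacians
    {K : Type*} [Field K] [CharZero K]
    {A : Type*} [AddCommGroup A] [Module K A]
    {B : Type*} [AddCommGroup B] [Module K B]
    (S : GSA K A) (T : GSA K B) (hgen : S.Generates)
    (p : ℤ) (τ : A →ₗ[K] A →ₗ[K] K) (ω : B →ₗ[K] B →ₗ[K] K)
    (hτ : S.IsSymPairing p τ) (hω : T.IsSymPairing p ω)
    -- Φ models Sym f : an algebra map preserving unit, products, degrees and generators
    (Φ : A →ₗ[K] B)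
    (hone : Φ S.one = T.one)
    (hmul : ∀ a b, Φ (S.mul a b) = T.mul (Φ a) (Φ b))
    (hgrade : ∀ {i : ℤ} {a : A}, a ∈ S.grade i → Φ a ∈ T.grade i)
    (hgenmap : ∀ {i : ℤ} {v : A}, v ∈ S.gen i → Φ v ∈ T.gen i)
    -- f preserves the pairings: τ = ω ∘ (f ⊗ f)
    (hpair : ∀ a b : A, τ a b = ω (Φ a) (Φ b))
    (Dτ : A →ₗ[K] A) (Dω : B →ₗ[K] B)
    (hDτ : S.IsLaplacian p τ Dτ) (hDω : T.IsLaplacian p ω Dω) :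
    Φ ∘ₗ Dτ = Dω ∘ₗ Φ := by
  -- every monomial is homogeneous
  have hdeg_mon : ∀ a : A, S.IsMon a → ∃ i, a ∈ S.grade i := by
    intro a h
    induction h with
    | one => exact ⟨0, S.one_mem⟩
    | @gen i v hv => exact ⟨i, S.gen_le i hv⟩
    | @mul a b _ _ iha ihb =>
      obtain ⟨i, hi⟩ := iha
      obtain ⟨j, hj⟩ := ihb
      exact ⟨i + j, S.mul_mem hi hj⟩
  -- brackets with a generator in the first slot
  have inner : ∀ {i₀ j : ℤ} {v : A}, v ∈ S.gen i₀ → v ∈ S.grade j →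
      ∀ a, S.IsMon a → Φ (S.br Dτ p j v a) = T.br Dω p j (Φ v) (Φ a) := by
    intro i₀ j v hv hvj a hmon
    induction hmon with
    | one =>
      rw [br_one_right S Dτ hDτ.map_one, map_zero, hone,
        br_one_right T Dω hDω.map_one]
    | @gen k w hw =>
      simp [GSA.br, hDτ.map_gen hv, hDτ.map_gen hw, hDτ.map_pair hv hw,
        hDω.map_gen (hgenmap hv), hDω.map_gen (hgenmap hw),
        hDω.map_pair (hgenmap hv) (hgenmap hw), hmul, hone, hpair v w]
    | @mul a1 a2 h1 h2 ih1 ih2 =>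
      obtain ⟨j1, hg1⟩ := hdeg_mon a1 h1
      obtain ⟨j2, hg2⟩ := hdeg_mon a2 h2
      rw [hDτ.br_der hvj hg1 hg2, hmul,
        hDω.br_der (hgrade hvj) (hgrade hg1) (hgrade hg2)]
      simp [map_add, map_smul, hmul, ih1, ih2]
  -- brackets of arbitrary monomials
  have key : ∀ b, S.IsMon b → ∀ {i j : ℤ} {a : A}, S.IsMon a →
      a ∈ S.grade i → b ∈ S.grade j →
      Φ (S.br Dτ p i a b) = T.br Dω p i (Φ a) (Φ b) := by
    intro b hb
    induction hb with
    | one =>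
      intro i j a _ _ _
      rw [br_one_right S Dτ hDτ.map_one, map_zero, hone,
        br_one_right T Dω hDω.map_one]
    | @gen i₀ v hv =>
      intro i j a hamon ha hvj
      rw [br_symm S p Dτ hDτ.deg ha hvj,
        br_symm T p Dω hDω.deg (hgrade ha) (hgrade hvj),
        map_smul, inner hv hvj a hamon]
    | @mul b1 b2 h1 h2 ih1 ih2 =>
      intro i j a hamon ha hbj
      obtain ⟨j1, hg1⟩ := hdeg_mon b1 h1
      obtain ⟨j2, hg2⟩ := hdeg_mon b2 h2
      rw [hDτ.br_der ha hg1 hg2, hmul b1 b2,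
        hDω.br_der (hgrade ha) (hgrade hg1) (hgrade hg2)]
      simp [map_add, map_smul, hmul, ih1 hamon ha hg1, ih2 hamon ha hg2]
  -- the main statement on monomials
  have main : ∀ a, S.IsMon a → Φ (Dτ a) = Dω (Φ a) := by
    intro a h
    induction h with
    | one => rw [hDτ.map_one, map_zero, hone, hDω.map_one]
    | @gen i v hv => rw [hDτ.map_gen hv, map_zero, hDω.map_gen (hgenmap hv)]
    | @mul a b ha hb iha ihb =>
      obtain ⟨i, hgi⟩ := hdeg_mon a ha
      obtain ⟨j, hgj⟩ := hdeg_mon b hb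
      have e1 : Dτ (S.mul a b) =
          S.br Dτ p i a b + S.mul (Dτ a) b + gsgn K (p * i) • S.mul a (Dτ b) := by
        unfold GSA.br; abel
      have e2 : Dω (T.mul (Φ a) (Φ b)) =
          T.br Dω p i (Φ a) (Φ b) + T.mul (Dω (Φ a)) (Φ b) +
            gsgn K (p * i) • T.mul (Φ a) (Dω (Φ b)) := by
        unfold GSA.br; abel
      rw [hmul, e2, e1, map_add, map_add, map_smul, hmul, hmul, iha, ihb,
        key b hb ha hgi hgj]
  -- conclude by linearity
  apply LinearMap.ext
  intro a
  simp only [LinearMap.comp_apply]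
  induction hgen a using Submodule.span_induction with
  | mem x hx => exact main x hx
  | zero => simp
  | add x y _ _ hx hy => simp [hx, hy]
  | smul c x _ hx => simp [hx]
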